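/- arXiv:2603.14514 — 3 statements merged into one kernel-verified Lean document; each statement's English description precedes it below -/
import Mathlib

section
/- Let the stepsize be α_k = a/(k + K₀) with μ a > 1 (in particular a ≥ 2/μ) and K₀ ≥ μ a. Then for every k ∈ {0, 1, …}: Δ₀ ζ_{0,k−1} + (CL/2) Σ_{ℓ=0}^{k−1} α_ℓ² ζ_{ℓ+1,k−1} ≤ (K₀ Δ₀ + e a² C L / 2) / (k + K₀). -/
open scoped BigOperators

/-!
Since `μ a ≥ 2`, each factor satisfies `1 - μ a / t ≤ 1 - 2 / t ≤ ((t - 1) / t)²` with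
`t = j + K₀`, so the products `ζ` telescope: `ζ_{m,k-1} ≤ ((m + K₀ - 1) / (k + K₀ - 1))²`.
This bounds the first term by `Δ₀ (K₀ - 1) / (k + K₀ - 1) ≤ K₀ Δ₀ / (k + K₀)`, and every summand
`α_ℓ² ζ_{ℓ+1,k-1}` by `a² / (k + K₀ - 1)²`; the resulting `k a² / (k + K₀ - 1)²` is at most
`2 a² / (k + K₀) ≤ e a² / (k + K₀)`.
-/

open Finset

theorem Finset.prod_Ico_le_div_of_le_div {R : Type*} [Field R] [LinearOrder R]
    [IsStrictOrderedRing R] {f g : ℕ → R} (hf : ∀ j, 0 ≤ f j) (hg : ∀ j, 0 < g j)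
    (hfg : ∀ j, f j ≤ g j / g (j + 1)) {m k : ℕ} (hmk : m ≤ k) :
    ∏ j ∈ Ico m k, f j ≤ g m / g k := by
  induction k, hmk using Nat.le_induction with
  | base => simp [(hg m).ne']
  | succ k hmk ih =>
    calc ∏ j ∈ Ico m (k + 1), f j = (∏ j ∈ Ico m k, f j) * f k := prod_Ico_succ_top hmk f
      _ ≤ g m / g k * (g k / g (k + 1)) :=
        mul_le_mul ih (hfg k) (hf k) (div_nonneg (hg m).le (hg k).le)
      _ = g m / g (k + 1) := div_mul_div_cancel₀ (hg k).ne'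

theorem one_sub_div_le_sq_sub_one_div {c t : ℝ} (hc : 2 ≤ c) (ht : 0 < t) :
    1 - c / t ≤ ((t - 1) / t) ^ 2 := by
  have hexpand : ((t - 1) / t) ^ 2 = 1 - 2 / t + (1 / t) ^ 2 := by field_simp; ring
  have : 2 / t ≤ c / t := div_le_div_of_nonneg_right hc ht.le
  nlinarith [sq_nonneg (1 / t)]

section StepFactors

variable {μ a K0 : ℝ}

theorem stepFactor_nonneg (h2 : 2 ≤ μ * a) (hK0 : μ * a ≤ K0) (j : ℕ) :
    0 ≤ 1 - μ * (a / (j + K0)) := by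
  have hj : μ * a ≤ j + K0 := by linarith [(Nat.cast_nonneg j : (0 : ℝ) ≤ j)]
  rw [← mul_div_assoc, sub_nonneg, div_le_one (by linarith)]
  exact hj

theorem prod_Ico_stepFactor_le (h2 : 2 ≤ μ * a) (hK0 : μ * a ≤ K0) {m k : ℕ} (hmk : m ≤ k) :
    ∏ j ∈ Ico m k, (1 - μ * (a / (j + K0))) ≤ ((m + K0 - 1) / (k + K0 - 1)) ^ 2 := by
  have hpos (j : ℕ) : 0 < (j : ℝ) + K0 - 1 := by
    linarith [(Nat.cast_nonneg j : (0 : ℝ) ≤ j)]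
  rw [div_pow]
  refine prod_Ico_le_div_of_le_div (g := fun j : ℕ ↦ ((j : ℝ) + K0 - 1) ^ 2)
    (stepFactor_nonneg h2 hK0) (fun j ↦ pow_pos (hpos j) 2) (fun j ↦ ?_) hmk
  have ht : (0 : ℝ) < j + K0 := by linarith [hpos j]
  have hshift : ((j + 1 : ℕ) : ℝ) + K0 - 1 = j + K0 := by push_cast; ring
  simp only [hshift, ← div_pow, ← mul_div_assoc]
  exact one_sub_div_le_sq_sub_one_div h2 ht

theorem initial_term_le {Δ0 : ℝ} (hΔ0 : 0 ≤ Δ0) (h2 : 2 ≤ μ * a) (hK0 : μ * a ≤ K0) (k : ℕ) :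
    Δ0 * ∏ j ∈ range k, (1 - μ * (a / (j + K0))) ≤ K0 * Δ0 / (k + K0) := by
  have hk : (0 : ℝ) ≤ k := Nat.cast_nonneg k
  have hρ0 : 0 ≤ (K0 - 1) / (k + K0 - 1) := div_nonneg (by linarith) (by linarith)
  have hρ1 : (K0 - 1) / (k + K0 - 1) ≤ 1 := (div_le_one (by linarith)).2 (by linarith)
  have hprod : ∏ j ∈ range k, (1 - μ * (a / (j + K0))) ≤ (K0 - 1) / (k + K0 - 1) := by
    have h := prod_Ico_stepFactor_le h2 hK0 (Nat.zero_le k)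
    rw [← range_eq_Ico, Nat.cast_zero, zero_add] at h
    nlinarith
  have hρ : (K0 - 1) / (k + K0 - 1) ≤ K0 / (k + K0) := by
    rw [div_le_div_iff₀ (by linarith) (by linarith)]
    nlinarith
  calc Δ0 * ∏ j ∈ range k, (1 - μ * (a / (j + K0))) ≤ Δ0 * (K0 / (k + K0)) := by gcongr; linarith
    _ = K0 * Δ0 / (k + K0) := by ring

theorem noise_sum_le (h2 : 2 ≤ μ * a) (hK0 : μ * a ≤ K0) (k : ℕ) :
    ∑ ℓ ∈ range k, (a / (ℓ + K0)) ^ 2 * ∏ j ∈ Ico (ℓ + 1) k, (1 - μ * (a / (j + K0)))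
      ≤ 2 * a ^ 2 / (k + K0) := by
  have hk : (0 : ℝ) ≤ k := Nat.cast_nonneg k
  have hsummand : ∀ ℓ ∈ range k,
      (a / (ℓ + K0)) ^ 2 * ∏ j ∈ Ico (ℓ + 1) k, (1 - μ * (a / (j + K0)))
        ≤ a ^ 2 / (k + K0 - 1) ^ 2 := by
    intro ℓ hℓ
    have hℓ0 : (0 : ℝ) < ℓ + K0 := by linarith [(Nat.cast_nonneg ℓ : (0 : ℝ) ≤ ℓ)]
    have hprod := prod_Ico_stepFactor_le (m := ℓ + 1) h2 hK0 (mem_range.1 hℓ)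
    rw [Nat.cast_succ, add_right_comm, add_sub_cancel_right] at hprod
    calc (a / (ℓ + K0)) ^ 2 * ∏ j ∈ Ico (ℓ + 1) k, (1 - μ * (a / (j + K0)))
        ≤ (a / (ℓ + K0)) ^ 2 * ((ℓ + K0) / (k + K0 - 1)) ^ 2 := by gcongr
      _ = a ^ 2 / (k + K0 - 1) ^ 2 := by field_simp
  have hquad : k * (k + K0) ≤ 2 * (k + K0 - 1) ^ 2 := by nlinarith
  calc _ ≤ ∑ _ℓ ∈ range k, a ^ 2 / (k + K0 - 1) ^ 2 := sum_le_sum hsummand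
    _ = k * a ^ 2 / (k + K0 - 1) ^ 2 := by rw [sum_const, card_range, nsmul_eq_mul, mul_div_assoc]
    _ ≤ 2 * a ^ 2 / (k + K0) := by
      rw [div_le_div_iff₀ (by nlinarith) (by linarith)]
      nlinarith [mul_le_mul_of_nonneg_left hquad (sq_nonneg a)]

end StepFactors

theorem sgd_pl_deterministic_term_bound_general
    (Δ0 C L μ a K0 : ℝ)
    (hΔ0 : 0 ≤ Δ0) (hC : 0 ≤ C) (hL : 0 < L) (hμ : 0 < μ)
    (ha : 2 / μ ≤ a) (hK0 : μ * a ≤ K0) :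
    ∀ k : ℕ,
      Δ0 * (∏ j ∈ Finset.range k, (1 - μ * (a / (j + K0)))) +
        (C * L / 2) *
          ∑ ℓ ∈ Finset.range k,
            (a / (ℓ + K0)) ^ 2 * ∏ j ∈ Finset.Ico (ℓ + 1) k, (1 - μ * (a / (j + K0)))
      ≤ (K0 * Δ0 + Real.exp 1 * a ^ 2 * C * L / 2) / (k + K0) := by
  intro k
  have h2 : 2 ≤ μ * a := by rwa [div_le_iff₀ hμ, mul_comm] at ha
  have hk : (0 : ℝ) < k + K0 := by linarith [(Nat.cast_nonneg k : (0 : ℝ) ≤ k)]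
  have he : (2 : ℝ) ≤ Real.exp 1 := by linarith [Real.add_one_le_exp (1 : ℝ)]
  have hnoise : C * L / 2 * ∑ ℓ ∈ range k,
      (a / (ℓ + K0)) ^ 2 * ∏ j ∈ Ico (ℓ + 1) k, (1 - μ * (a / (j + K0)))
        ≤ Real.exp 1 * a ^ 2 * C * L / 2 / (k + K0) :=
    calc _ ≤ C * L / 2 * (2 * a ^ 2 / (k + K0)) := by gcongr; exact noise_sum_le h2 hK0 k
      _ ≤ C * L / 2 * (Real.exp 1 * a ^ 2 / (k + K0)) := by gcongr
      _ = Real.exp 1 * a ^ 2 * C * L / 2 / (k + K0) := by ring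
  rw [add_div]
  exact add_le_add (initial_term_le hΔ0 h2 hK0 k) hnoise

/-- Lemma A.4 (bound on the deterministic terms): for stepsizes `α_k = a/(k+K₀)` with
`μ a > 1` (in particular `a ≥ 2/μ`) and `K₀ ≥ μ a`, for every `k ≥ 0`,
`Δ₀ ζ_{0,k-1} + (CL/2) Σ_{ℓ=0}^{k-1} α_ℓ² ζ_{ℓ+1,k-1} ≤ (K₀ Δ₀ + e a² C L / 2)/(k+K₀)`,
where `ζ_{m,n} = ∏_{j=m}^{n} (1 - μ α_j)` (equal to `1` when `n < m`). -/
theorem sgd_pl_deterministic_term_bound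
    (Δ0 C L μ a K0 : ℝ)
    (hΔ0 : 0 ≤ Δ0) (hC : 0 ≤ C) (hL : 0 < L) (hμ : 0 < μ)
    (hμa : 1 < μ * a) (ha : 2 / μ ≤ a) (hK0 : μ * a ≤ K0) :
    ∀ k : ℕ,
      Δ0 * (∏ j ∈ Finset.range k, (1 - μ * (a / (j + K0)))) +
        (C * L / 2) *
          ∑ ℓ ∈ Finset.range k,
            (a / (ℓ + K0)) ^ 2 * ∏ j ∈ Finset.Ico (ℓ + 1) k, (1 - μ * (a / (j + K0)))
      ≤ (K0 * Δ0 + Real.exp 1 * a ^ 2 * C * L / 2) / (k + K0) :=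
  sgd_pl_deterministic_term_bound_general Δ0 C L μ a K0 hΔ0 hC hL hμ ha hK0
end

section
/- For every x ∈ ℝ^d and every z ∈ 𝒵, the Poisson-equation solution satisfies ‖V(x, z)‖ ≤ 2 t_mix √d · sup_{z′∈𝒵} ‖g(x, z′)‖, and consequently ‖V(x, z)‖² ≤ 4 t_mix² d ((2AL + B)(f(x) − f⋆) + C). -/
open MeasureTheory ProbabilityTheory Filter
open scoped BigOperators ENNReal RealInnerProductSpace Topology

/-- The `k`-step transition kernel `p^{(k)}` induced by a transition kernel `p`
(`p^{(0)}` is the identity/Dirac kernel). -/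
noncomputable def kstep {𝒵 : Type*} [MeasurableSpace 𝒵] (p : Kernel 𝒵 𝒵) : ℕ → Kernel 𝒵 𝒵 :=
  fun n => Nat.rec Kernel.id (fun _ κ => κ.comp p) n

instance kstep_isMarkov {𝒵 : Type*} [MeasurableSpace 𝒵] (p : Kernel 𝒵 𝒵) [IsMarkovKernel p] :
    ∀ n, IsMarkovKernel (kstep p n)
  | 0 => inferInstanceAs (IsMarkovKernel Kernel.id)
  | n + 1 => by
      have := kstep_isMarkov p n
      exact inferInstanceAs (IsMarkovKernel ((kstep p n).comp p))

/-- The total variation norm `‖μ - ν‖_TV = |μ - ν|(𝒵)` of the difference of two finite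
measures, where `|·|` denotes the total variation (Jordan decomposition) measure. -/
noncomputable def tvDist {𝒵 : Type*} [MeasurableSpace 𝒵] (μ ν : Measure 𝒵)
    [IsFiniteMeasure μ] [IsFiniteMeasure ν] : ℝ :=
  ((μ.toSignedMeasure - ν.toSignedMeasure).totalVariation Set.univ).toReal

/-- The solution `V(x, z) = 𝔼[Σ_{ℓ≥0} (g(x, Z_ℓ) - ∇f(x)) | Z₀ = z]
= Σ_{ℓ≥0} (∫ g(x, z') p^{(ℓ)}(dz' | z) - ∇f(x))` of the Poisson equation. -/
noncomputable def poissonV {d : ℕ} {𝒵 : Type*} [MeasurableSpace 𝒵]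
    (p : Kernel 𝒵 𝒵) (f : EuclideanSpace ℝ (Fin d) → ℝ)
    (g : EuclideanSpace ℝ (Fin d) → 𝒵 → EuclideanSpace ℝ (Fin d))
    (x : EuclideanSpace ℝ (Fin d)) (z : 𝒵) : EuclideanSpace ℝ (Fin d) :=
  ∑' ℓ : ℕ, ((∫ z', g x z' ∂((kstep p ℓ) z)) - gradient f x)

/-!
The `ℓ`-th term of `V(x, z)` is `∫ g(x, ·) d(p^{(ℓ)}(· | z) - π)`, so its norm is at most
`sup ‖g(x, ·)‖ · 2^{-⌊ℓ/t_mix⌋}`, and these bounds sum to `2 t_mix sup ‖g(x, ·)‖`; then `√d ≥ 1`.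
For the squared bound, the descent lemma along `-∇f(x)` gives `‖∇f(x)‖² ≤ 2L(f(x) - f⋆)`, which
turns the growth condition on `g` into `‖g(x, ·)‖² ≤ (2AL + B)(f(x) - f⋆) + C`.
-/

open Set

theorem norm_integral_sub_integral_le_mul_tvDist {𝒵 E : Type*} [MeasurableSpace 𝒵]
    [NormedAddCommGroup E] [NormedSpace ℝ E] (μ ν : Measure 𝒵) [IsFiniteMeasure μ]
    [IsFiniteMeasure ν] {h : 𝒵 → E} {M : ℝ} (hM : ∀ z, ‖h z‖ ≤ M) (hh : StronglyMeasurable h) :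
    ‖∫ z, h z ∂μ - ∫ z, h z ∂ν‖ ≤ M * tvDist μ ν := by
  set s := μ.toSignedMeasure - ν.toSignedMeasure
  set P := s.toJordanDecomposition.posPart
  set N := s.toJordanDecomposition.negPart
  have hint : ∀ (ρ : Measure 𝒵) [IsFiniteMeasure ρ], Integrable h ρ := fun ρ _ =>
    (integrable_const M).mono' hh.aestronglyMeasurable (.of_forall hM)
  have hjordan : μ + N = P + ν := by
    have : μ.toSignedMeasure - ν.toSignedMeasure = P.toSignedMeasure - N.toSignedMeasure :=
      s.toSignedMeasure_toJordanDecomposition.symm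
    rwa [sub_eq_sub_iff_add_eq_add, ← Measure.toSignedMeasure_add, ← Measure.toSignedMeasure_add,
      Measure.toSignedMeasure_eq_toSignedMeasure_iff] at this
  have hdiff : ∫ z, h z ∂μ - ∫ z, h z ∂ν = ∫ z, h z ∂P - ∫ z, h z ∂N := by
    rw [sub_eq_sub_iff_add_eq_add, ← integral_add_measure (hint μ) (hint N),
      ← integral_add_measure (hint P) (hint ν), hjordan]
  have htv : tvDist μ ν = (P univ).toReal + (N univ).toReal := by
    rw [tvDist, SignedMeasure.totalVariation, Measure.add_apply,
      ENNReal.toReal_add (measure_ne_top _ _) (measure_ne_top _ _)]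
  calc ‖∫ z, h z ∂μ - ∫ z, h z ∂ν‖ ≤ ‖∫ z, h z ∂P‖ + ‖∫ z, h z ∂N‖ := hdiff ▸ norm_sub_le _ _
    _ ≤ M * (P univ).toReal + M * (N univ).toReal :=
      add_le_add (norm_integral_le_of_norm_le_const (.of_forall hM))
        (norm_integral_le_of_norm_le_const (.of_forall hM))
    _ = M * tvDist μ ν := by rw [htv, mul_add]

theorem hasSum_pow_div {r : ℝ} (hr₀ : 0 ≤ r) (hr₁ : r < 1) (t : ℕ) [NeZero t] :
    HasSum (fun ℓ : ℕ => r ^ (ℓ / t)) (t * (1 - r)⁻¹) := by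
  rw [← (Nat.divModEquiv t).symm.hasSum_iff]
  have hblocks : (fun ℓ : ℕ => r ^ (ℓ / t)) ∘ (Nat.divModEquiv t).symm =
      fun q : ℕ × Fin t => r ^ q.1 * 1 := by
    ext q
    rw [Function.comp_apply, Nat.divModEquiv_symm_apply, mul_one, Nat.add_comm,
      Nat.add_mul_div_right _ _ (NeZero.pos t), Nat.div_eq_of_lt q.2.is_lt, zero_add]
  have hfin : HasSum (fun _ : Fin t => (1 : ℝ)) t := by
    simpa using hasSum_fintype (fun _ : Fin t => (1 : ℝ))
  rw [hblocks, mul_comm]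
  exact (hasSum_geometric_of_lt_one hr₀ hr₁).mul hfin <|
    (summable_geometric_of_lt_one hr₀ hr₁).mul_of_nonneg hfin.summable
      (fun _ => pow_nonneg hr₀ _) (fun _ => zero_le_one)

section LipschitzGradient

variable {F : Type*} [NormedAddCommGroup F] [InnerProductSpace ℝ F] [CompleteSpace F]
  {f : F → ℝ} {L : ℝ}

/-- `gradient f` is `0` where `f` is not differentiable, so a Lipschitz `gradient f` forces
differentiability near any point where the gradient does not vanish. -/
theorem differentiableAt_of_lipschitz_gradient
    (hsmooth : ∀ y y', ‖gradient f y - gradient f y'‖ ≤ L * ‖y - y'‖) {x y : F}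
    (hy : L * ‖y - x‖ < ‖gradient f x‖) : DifferentiableAt ℝ f y := by
  by_contra hnd
  have := hsmooth x y
  rw [gradient_eq_zero_of_not_differentiableAt hnd, sub_zero, norm_sub_rev] at this
  linarith

theorem descent_lemma (hsmooth : ∀ y y', ‖gradient f y - gradient f y'‖ ≤ L * ‖y - y'‖)
    {x v : F} (hdiff : ∀ s ∈ Icc (0 : ℝ) 1, DifferentiableAt ℝ f (x + s • v)) :
    f (x + v) ≤ f x + ⟪gradient f x, v⟫ + L / 2 * ‖v‖ ^ 2 := by
  have hderiv : ∀ s ∈ Icc (0 : ℝ) 1,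
      HasDerivAt (fun s : ℝ => f (x + s • v)) ⟪gradient f (x + s • v), v⟫ s := by
    intro s hs
    have hline : HasDerivAt (fun s : ℝ => x + s • v) v s := by
      simpa using ((hasDerivAt_id s).smul_const v).const_add x
    have := (hdiff s hs).hasGradientAt.hasFDerivAt.comp_hasDerivAt s hline
    rw [InnerProductSpace.toDual_apply_apply] at this
    exact this
  have hquad : ∀ s : ℝ,
      HasDerivAt (fun s : ℝ => f x + s * ⟪gradient f x, v⟫ + L / 2 * s ^ 2 * ‖v‖ ^ 2)
        (⟪gradient f x, v⟫ + L * s * ‖v‖ ^ 2) s := fun s => by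
    have := (((hasDerivAt_id s).mul_const ⟪gradient f x, v⟫).const_add (f x)).add
      (((hasDerivAt_pow 2 s).const_mul (L / 2)).mul_const (‖v‖ ^ 2))
    exact this.congr_deriv (by push_cast; ring)
  have hslope : ∀ s ∈ Ico (0 : ℝ) 1,
      ⟪gradient f (x + s • v), v⟫ ≤ ⟪gradient f x, v⟫ + L * s * ‖v‖ ^ 2 := by
    intro s hs
    have hlip : ‖gradient f (x + s • v) - gradient f x‖ ≤ L * s * ‖v‖ := by
      simpa [norm_smul, abs_of_nonneg hs.1, mul_assoc] using hsmooth (x + s • v) x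
    have := (real_inner_le_norm _ v).trans (mul_le_mul_of_nonneg_right hlip (norm_nonneg v))
    rw [inner_sub_left] at this
    nlinarith
  have := image_le_of_deriv_right_le_deriv_boundary
    (fun s hs => (hderiv s hs).continuousAt.continuousWithinAt)
    (fun s hs => (hderiv s (Ico_subset_Icc_self hs)).hasDerivWithinAt) (by simp)
    (fun s _ => (hquad s).continuousAt.continuousWithinAt)
    (fun s _ => (hquad s).hasDerivWithinAt) hslope (right_mem_Icc.2 zero_le_one)
  simpa using this

theorem norm_gradient_sq_le (hL : 0 < L)
    (hsmooth : ∀ y y', ‖gradient f y - gradient f y'‖ ≤ L * ‖y - y'‖)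
    (hbdd : BddBelow (range f)) (x : F) :
    ‖gradient f x‖ ^ 2 ≤ 2 * L * (f x - ⨅ y, f y) := by
  set c := gradient f x
  have hinf : ⨅ y, f y ≤ f x := ciInf_le hbdd x
  rcases eq_or_ne c 0 with hc | hc
  · rw [hc, norm_zero]
    nlinarith
  have hc₀ : 0 < ‖c‖ := norm_pos_iff.2 hc
  -- for `s < L⁻¹` the segment to `x - s • c` lies in the ball where `f` is differentiable;
  -- the optimal step `s = L⁻¹` is then reached by closedness
  have hstep : ∀ s ∈ Ico 0 L⁻¹, ⨅ y, f y ≤ f x - s * ‖c‖ ^ 2 + L / 2 * s ^ 2 * ‖c‖ ^ 2 := by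
    intro s hs
    have hLs : L * s < 1 := by simpa [hL.ne'] using mul_lt_mul_of_pos_left hs.2 hL
    have hdiff : ∀ r ∈ Icc (0 : ℝ) 1, DifferentiableAt ℝ f (x + r • -(s • c)) := by
      refine fun r hr => differentiableAt_of_lipschitz_gradient (x := x) hsmooth ?_
      rw [add_sub_cancel_left, norm_smul, norm_neg, norm_smul, Real.norm_of_nonneg hr.1,
        Real.norm_of_nonneg hs.1]
      have : L * (r * s) ≤ L * s := mul_le_mul_of_nonneg_left
        (mul_le_of_le_one_left hs.1 hr.2) hL.le
      nlinarith
    calc ⨅ y, f y ≤ f (x + -(s • c)) := ciInf_le hbdd _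
      _ ≤ f x + ⟪c, -(s • c)⟫ + L / 2 * ‖-(s • c)‖ ^ 2 := descent_lemma hsmooth hdiff
      _ = f x - s * ‖c‖ ^ 2 + L / 2 * s ^ 2 * ‖c‖ ^ 2 := by
        rw [inner_neg_right, real_inner_smul_right, real_inner_self_eq_norm_sq, norm_neg,
          norm_smul, Real.norm_of_nonneg hs.1]
        ring
  have hclosed : IsClosed {s : ℝ | ⨅ y, f y ≤ f x - s * ‖c‖ ^ 2 + L / 2 * s ^ 2 * ‖c‖ ^ 2} :=
    isClosed_le continuous_const (by fun_prop)
  have hL' : L⁻¹ ∈ closure (Ico 0 L⁻¹) := by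
    rw [closure_Ico (inv_pos.2 hL).ne]
    exact right_mem_Icc.2 (inv_pos.2 hL).le
  have hmin := hclosed.closure_subset_iff.2 hstep hL'
  simp only [mem_ofPred_eq] at hmin
  field_simp at hmin
  nlinarith

end LipschitzGradient

theorem norm_poissonV_le {d : ℕ} {𝒵 : Type*} [MeasurableSpace 𝒵] {p : Kernel 𝒵 𝒵}
    [IsMarkovKernel p] {π : Measure 𝒵} [IsFiniteMeasure π] {tmix : ℕ} (htmix : tmix ≠ 0)
    (hmix : ∀ (k : ℕ) (z : 𝒵), tvDist ((kstep p k) z) π ≤ (2 : ℝ)⁻¹ ^ (k / tmix))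
    {f : EuclideanSpace ℝ (Fin d) → ℝ}
    {g : EuclideanSpace ℝ (Fin d) → 𝒵 → EuclideanSpace ℝ (Fin d)}
    {x : EuclideanSpace ℝ (Fin d)} (hgrad : gradient f x = ∫ z, g x z ∂π)
    (hg : StronglyMeasurable (g x)) {M : ℝ} (hM : ∀ z, ‖g x z‖ ≤ M) (z : 𝒵) :
    ‖poissonV p f g x z‖ ≤ 2 * tmix * M := by
  have : NeZero tmix := ⟨htmix⟩
  have hsum := (hasSum_pow_div (r := (2 : ℝ)⁻¹) (by norm_num) (by norm_num) tmix).mul_left M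
  refine (tsum_of_norm_bounded hsum fun ℓ => ?_).trans_eq (by norm_num; ring)
  rw [hgrad]
  exact (norm_integral_sub_integral_le_mul_tvDist _ _ hM hg).trans
    (mul_le_mul_of_nonneg_left (hmix ℓ z) ((norm_nonneg _).trans (hM z)))

theorem poisson_solution_norm_bound_general (d : ℕ)
    (𝒵 : Type) [MeasurableSpace 𝒵]
    (p : Kernel 𝒵 𝒵) [IsMarkovKernel p] (π : Measure 𝒵) [IsProbabilityMeasure π]
    (tmix : ℕ) (htmix : 1 ≤ tmix)
    (f : EuclideanSpace ℝ (Fin d) → ℝ)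
    (g : EuclideanSpace ℝ (Fin d) → 𝒵 → EuclideanSpace ℝ (Fin d))
    (fstar L A B C : ℝ)
    (hA : 0 ≤ A) (hL : 0 < L)
    (hbdd : BddBelow (Set.range f)) (hfstar : fstar = ⨅ y, f y)
    (hsmooth : ∀ y y', ‖gradient f y - gradient f y'‖ ≤ L * ‖y - y'‖)
    (hmix : ∀ (k : ℕ) (z : 𝒵), tvDist ((kstep p k) z) π ≤ (2 : ℝ)⁻¹ ^ (k / tmix))
    (hgrad : ∀ x, gradient f x = ∫ z, g x z ∂π)
    (hgmeas : ∀ x, Measurable (g x))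
    (hgABC : ∀ x z, ‖g x z‖ ^ 2 ≤ A * ‖gradient f x‖ ^ 2 + B * (f x - fstar) + C) :
    ∀ (x : EuclideanSpace ℝ (Fin d)) (z : 𝒵),
      ‖poissonV p f g x z‖ ≤ 2 * tmix * Real.sqrt d * (⨆ z' : 𝒵, ‖g x z'‖) ∧
      ‖poissonV p f g x z‖ ^ 2
        ≤ 4 * tmix ^ 2 * d * ((2 * A * L + B) * (f x - fstar) + C) := by
  intro x z
  rcases Nat.eq_zero_or_pos d with rfl | hd
  · simp [Subsingleton.elim (poissonV p f g x z) 0]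
  set R := (2 * A * L + B) * (f x - fstar) + C
  have hgR : ∀ z', ‖g x z'‖ ^ 2 ≤ R := fun z' => by
    have := mul_le_mul_of_nonneg_left (hfstar ▸ norm_gradient_sq_le hL hsmooth hbdd x) hA
    linarith [hgABC x z']
  have hgR' : ∀ z', ‖g x z'‖ ≤ √R := fun z' => Real.le_sqrt_of_sq_le (hgR z')
  set M := ⨆ z', ‖g x z'‖
  have hM : ∀ z', ‖g x z'‖ ≤ M := le_ciSup ⟨√R, forall_mem_range.2 hgR'⟩
  have hM₀ : 0 ≤ M := (norm_nonneg _).trans (hM z)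
  have hMR : M ^ 2 ≤ R := (Real.le_sqrt hM₀ ((sq_nonneg _).trans (hgR z))).1
    (Real.iSup_le hgR' (Real.sqrt_nonneg _))
  have hd₁ : 1 ≤ √(d : ℝ) := Real.one_le_sqrt.2 (by exact_mod_cast hd)
  have hV : ‖poissonV p f g x z‖ ≤ 2 * tmix * √d * M := by
    refine (norm_poissonV_le (by omega) hmix (hgrad x) (hgmeas x).stronglyMeasurable hM z).trans ?_
    nlinarith [mul_nonneg (mul_nonneg zero_le_two (Nat.cast_nonneg tmix)) hM₀]
  refine ⟨hV, ?_⟩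
  calc ‖poissonV p f g x z‖ ^ 2 ≤ (2 * tmix * √d * M) ^ 2 :=
        pow_le_pow_left₀ (norm_nonneg _) hV 2
    _ = 4 * tmix ^ 2 * d * M ^ 2 := by
      rw [mul_pow, mul_pow, mul_pow, Real.sq_sqrt (Nat.cast_nonneg d)]
      ring
    _ ≤ 4 * tmix ^ 2 * d * R := by gcongr

/-- Lemma C.1: for every `x ∈ ℝ^d` and `z ∈ 𝒵`, the solution of the Poisson equation
satisfies `‖V(x,z)‖ ≤ 2 t_mix √d sup_{z'} ‖g(x,z')‖`, and consequently
`‖V(x,z)‖² ≤ 4 t_mix² d ((2AL + B)(f(x) - f⋆) + C)`. -/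
theorem poisson_solution_norm_bound (d : ℕ)
    (𝒵 : Type) [MeasurableSpace 𝒵] [TopologicalSpace 𝒵] [CompactSpace 𝒵] [Nonempty 𝒵]
    (p : Kernel 𝒵 𝒵) [IsMarkovKernel p] (π : Measure 𝒵) [IsProbabilityMeasure π]
    (tmix : ℕ) (htmix : 1 ≤ tmix)
    (f : EuclideanSpace ℝ (Fin d) → ℝ)
    (g : EuclideanSpace ℝ (Fin d) → 𝒵 → EuclideanSpace ℝ (Fin d))
    (fstar L A B C : ℝ)
    (hA : 0 ≤ A) (hB : 0 ≤ B) (hC : 0 ≤ C) (hL : 0 < L)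
    (hbdd : BddBelow (Set.range f)) (hfstar : fstar = ⨅ y, f y)
    (hsmooth : ∀ y y', ‖gradient f y - gradient f y'‖ ≤ L * ‖y - y'‖)
    (hinv : π.bind (fun z => p z) = π)
    (hmix : ∀ (k : ℕ) (z : 𝒵), tvDist ((kstep p k) z) π ≤ (2 : ℝ)⁻¹ ^ (k / tmix))
    (hgrad : ∀ x, gradient f x = ∫ z, g x z ∂π)
    (hgmeas : ∀ x, Measurable (g x))
    (hgABC : ∀ x z, ‖g x z‖ ^ 2 ≤ A * ‖gradient f x‖ ^ 2 + B * (f x - fstar) + C) :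
    ∀ (x : EuclideanSpace ℝ (Fin d)) (z : 𝒵),
      ‖poissonV p f g x z‖ ≤ 2 * tmix * Real.sqrt d * (⨆ z' : 𝒵, ‖g x z'‖) ∧
      ‖poissonV p f g x z‖ ^ 2
        ≤ 4 * tmix ^ 2 * d * ((2 * A * L + B) * (f x - fstar) + C) :=
  poisson_solution_norm_bound_general d 𝒵 p π tmix htmix f g fstar L A B C hA hL hbdd hfstar hsmooth
    hmix hgrad hgmeas hgABC
end

section
/- Let α_j = a/(j + K₀) with a, K₀, μ > 0 and K₀ ≥ μa, and ζ_{m,n} = ∏_{j=m}^{n}(1 − μα_j). Then for all natural numbers m ≤ n: ζ_{m,n} ≤ ((m + K₀)/(n + K₀ + 1))^{μa}; and if moreover m ≥ 1, ζ_{m,n} ≤ e · ((m + K₀ − 1)/(n + K₀ + 1))^{μa}. -/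
/-!
Write `c = μ a` and `t_j = j + K₀`. Since `1 + 1/t ≤ e^{1/t}`, each factor satisfies
`1 - c/t ≤ e^{-c/t} ≤ (t/(t+1))^c`, and the condition `K₀ ≥ c` makes every factor nonnegative,
so the factorwise bounds multiply. The product of the `t_j/(t_j+1)` telescopes to
`(m+K₀)/(n+K₀+1)`. For the second bound put `s = m+K₀-1 ≥ c`; then
`((s+1)/s)^c ≤ e^{c/s} ≤ e`.
-/

open Finset Real

lemma add_one_div_rpow_le_exp {c t : ℝ} (hc : 0 ≤ c) (ht : 0 < t) :
    ((t + 1) / t) ^ c ≤ exp (c / t) := by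
  calc ((t + 1) / t) ^ c = (1 / t + 1) ^ c := by rw [add_div, div_self ht.ne', add_comm]
    _ ≤ exp (1 / t) ^ c := by gcongr; exact add_one_le_exp _
    _ = exp (c / t) := by rw [← exp_mul, one_div_mul_eq_div]

lemma one_sub_div_le_div_add_one_rpow {c t : ℝ} (hc : 0 ≤ c) (ht : 0 < t) :
    1 - c / t ≤ (t / (t + 1)) ^ c := by
  calc 1 - c / t ≤ exp (-(c / t)) := by linarith [add_one_le_exp (-(c / t))]
    _ = (exp (c / t))⁻¹ := exp_neg _
    _ ≤ (((t + 1) / t) ^ c)⁻¹ := by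
      gcongr
      exact add_one_div_rpow_le_exp hc ht
    _ = (t / (t + 1)) ^ c := by rw [← inv_rpow (by positivity), inv_div]

lemma prod_Icc_div_add_one {x : ℝ} {m n : ℕ} (hmn : m ≤ n) (hx : 0 < m + x) :
    ∏ j ∈ Icc m n, ((j + x) / (j + x + 1)) = (m + x) / (n + x + 1) := by
  induction n, hmn using Nat.le_induction with
  | base => rw [Icc_self, prod_singleton]
  | succ n hmn ih =>
    have hn : (0 : ℝ) < n + x + 1 := by
      have : (m : ℝ) ≤ n := by exact_mod_cast hmn
      linarith
    rw [prod_Icc_succ_top (by omega), ih]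
    push_cast
    field_simp
    ring

lemma prod_Icc_one_sub_div_le {c K : ℝ} (hc : 0 < c) (hcK : c ≤ K) {m n : ℕ} (hmn : m ≤ n) :
    ∏ j ∈ Icc m n, (1 - c / (j + K)) ≤ ((m + K) / (n + K + 1)) ^ c := by
  have hpos (j : ℕ) : c ≤ j + K := by linarith [(Nat.cast_nonneg j : (0 : ℝ) ≤ j)]
  calc ∏ j ∈ Icc m n, (1 - c / (j + K))
      ≤ ∏ j ∈ Icc m n, ((j + K) / (j + K + 1)) ^ c := by
        refine prod_le_prod (fun j _ => ?_) (fun j _ => ?_)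
        · rw [sub_nonneg, div_le_one (hc.trans_le (hpos j))]
          exact hpos j
        · exact one_sub_div_le_div_add_one_rpow hc.le (hc.trans_le (hpos j))
    _ = (∏ j ∈ Icc m n, ((j + K) / (j + K + 1))) ^ c :=
        finsetProd_rpow _ _ (fun j _ => div_nonneg (by linarith [hpos j]) (by linarith [hpos j])) c
    _ = ((m + K) / (n + K + 1)) ^ c := by rw [prod_Icc_div_add_one hmn (hc.trans_le (hpos m))]

lemma add_one_div_rpow_le_exp_one_mul {c s y : ℝ} (hc : 0 ≤ c) (hcs : c ≤ s) (hs : 0 < s)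
    (hy : 0 ≤ y) : ((s + 1) / y) ^ c ≤ exp 1 * (s / y) ^ c := by
  have hexp : ((s + 1) / s) ^ c ≤ exp 1 :=
    (add_one_div_rpow_le_exp hc hs).trans (exp_le_exp.mpr ((div_le_one hs).mpr hcs))
  calc ((s + 1) / y) ^ c = ((s + 1) / s) ^ c * (s / y) ^ c := by
        rw [← mul_rpow (by positivity) (by positivity), div_mul_div_cancel₀ hs.ne']
    _ ≤ exp 1 * (s / y) ^ c := by gcongr

theorem zeta_product_bound_general (a K0 μ : ℝ)
    (ha : 0 < a) (hμ : 0 < μ) (hK0 : μ * a ≤ K0) :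
    ∀ m n : ℕ, m ≤ n →
      ((∏ j ∈ Finset.Icc m n, (1 - μ * (a / (j + K0))))
          ≤ (((m : ℝ) + K0) / ((n : ℝ) + K0 + 1)) ^ (μ * a))
      ∧ (1 ≤ m →
        (∏ j ∈ Finset.Icc m n, (1 - μ * (a / (j + K0))))
          ≤ Real.exp 1 * (((m : ℝ) + K0 - 1) / ((n : ℝ) + K0 + 1)) ^ (μ * a)) := by
  intro m n hmn
  have hc : 0 < μ * a := mul_pos hμ ha
  have hbound : ∏ j ∈ Icc m n, (1 - μ * (a / (j + K0)))
      ≤ (((m : ℝ) + K0) / ((n : ℝ) + K0 + 1)) ^ (μ * a) := by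
    simpa only [mul_div_assoc] using prod_Icc_one_sub_div_le hc hK0 hmn
  refine ⟨hbound, fun hm => hbound.trans ?_⟩
  have hm : (1 : ℝ) ≤ m := by exact_mod_cast hm
  have hn : (0 : ℝ) ≤ n := n.cast_nonneg
  have hcs : μ * a ≤ m + K0 - 1 := by linarith
  simpa only [sub_add_cancel] using
    add_one_div_rpow_le_exp_one_mul (y := n + K0 + 1) hc.le hcs (hc.trans_le hcs) (by linarith)

/-- Lemma E.1: for stepsizes `α_j = a/(j+K₀)` with `a, K₀, μ > 0` and `K₀ ≥ μ a`, and
`ζ_{m,n} = ∏_{j=m}^{n} (1 - μ α_j)`, for all naturals `m ≤ n`: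
`ζ_{m,n} ≤ ((m+K₀)/(n+K₀+1))^{μ a}`, and if moreover `m ≥ 1`,
`ζ_{m,n} ≤ e ((m+K₀-1)/(n+K₀+1))^{μ a}`. -/
theorem zeta_product_bound (a K0 μ : ℝ)
    (ha : 0 < a) (hK0pos : 0 < K0) (hμ : 0 < μ) (hK0 : μ * a ≤ K0) :
    ∀ m n : ℕ, m ≤ n →
      ((∏ j ∈ Finset.Icc m n, (1 - μ * (a / (j + K0))))
          ≤ (((m : ℝ) + K0) / ((n : ℝ) + K0 + 1)) ^ (μ * a))
      ∧ (1 ≤ m →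
        (∏ j ∈ Finset.Icc m n, (1 - μ * (a / (j + K0))))
          ≤ Real.exp 1 * (((m : ℝ) + K0 - 1) / ((n : ℝ) + K0 + 1)) ^ (μ * a)) :=
  zeta_product_bound_general a K0 μ ha hμ hK0
end
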